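/- Let E ⊂ ℝ^N be measurable, α > 0, and u : [0,T] → L^{α+1}(E) be given via a measurable function u(x,t). Then t ↦ u(·,t) belongs to C([0,T]; L^{α+1}(E)) if and only if t ↦ |u|^{α-1}u(·,t) belongs to C([0,T]; L^{(α+1)/α}(E)). -/

import Mathlib

/-!
The signed power `φ a = |a| ^ (α - 1) * a` is an odd increasing homeomorphism of `ℝ` with inverse
the signed power of exponent `α⁻¹`, and `‖φ ∘ f‖_{p/α} = ‖f‖_p ^ α`. So it suffices to show that
`f ↦ φ ∘ f` is continuous from `Lᵖ` to `L^{p/α}` for every `α > 0`, and to apply this to `α` and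
to `α⁻¹`. For `α ≤ 1`, `φ` is `α`-Hölder: `|φ a - φ b| ≤ 2 |a - b| ^ α`. For `α > 1` it is locally
Lipschitz, `|φ a - φ b| ≤ α (|a| ^ (α - 1) + |b| ^ (α - 1)) |a - b|`, and Hölder's inequality with
exponents `p / (α - 1)` and `p` bounds `‖φ ∘ f - φ ∘ g‖_{p/α}` by `‖f - g‖_p` times a factor that
stays bounded as `f → g`.
-/

open MeasureTheory Set Filter Topology
open scoped ENNReal

noncomputable def signedPow (α a : ℝ) : ℝ := |a| ^ (α - 1) * a

section Pointwise

variable {α : ℝ}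

lemma signedPow_of_nonneg (hα : 0 < α) {a : ℝ} (ha : 0 ≤ a) : signedPow α a = a ^ α := by
  rcases ha.eq_or_lt with rfl | ha
  · simp [signedPow, Real.zero_rpow hα.ne']
  · rw [signedPow, abs_of_pos ha, ← Real.rpow_add_one ha.ne', sub_add_cancel]

lemma signedPow_neg (α a : ℝ) : signedPow α (-a) = -signedPow α a := by
  rw [signedPow, signedPow, abs_neg, mul_neg]

lemma abs_signedPow (hα : 0 < α) (a : ℝ) : |signedPow α a| = |a| ^ α := by
  rw [← signedPow_of_nonneg hα (abs_nonneg a), signedPow, signedPow, abs_mul, abs_abs,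
    abs_of_nonneg (Real.rpow_nonneg (abs_nonneg a) _)]

lemma signedPow_inv_signedPow (hα : 0 < α) (a : ℝ) : signedPow α⁻¹ (signedPow α a) = a := by
  rcases eq_or_ne a 0 with rfl | ha
  · simp [signedPow]
  · have ha' : 0 < |a| := abs_pos.mpr ha
    rw [signedPow, abs_signedPow hα, signedPow, ← Real.rpow_mul ha'.le, ← mul_assoc,
      ← Real.rpow_add ha', mul_sub, mul_inv_cancel₀ hα.ne', mul_one]
    simp

lemma continuous_signedPow (hα : 0 < α) : Continuous (signedPow α) := by
  refine continuous_iff_continuousAt.2 fun x => ?_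
  rcases eq_or_ne x 0 with rfl | hx
  · -- near `0` the singular factor `|a| ^ (α - 1)` is controlled by `|signedPow α a| = |a| ^ α`
    have h : Tendsto (fun a : ℝ => |a| ^ α) (𝓝 0) (𝓝 0) :=
      (continuous_abs.rpow_const fun _ => Or.inr hα.le).tendsto' 0 0
        (by simp [Real.zero_rpow hα.ne'])
    have h0 : signedPow α 0 = 0 := by simp [signedPow]
    rw [ContinuousAt, h0]
    exact squeeze_zero_norm (fun a => (abs_signedPow hα a).le) h
  · exact ((Real.continuousAt_rpow_const _ _ (Or.inl (abs_ne_zero.mpr hx))).comp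
      continuous_abs.continuousAt).mul continuousAt_id

-- `signedPow α` is odd and increasing, so a symmetric even bound reduces to these two cases.
lemma abs_signedPow_sub_le_of_cases (hα : 0 < α) {C : ℝ → ℝ → ℝ}
    (hC_comm : ∀ a b, C a b = C b a) (hC_neg : ∀ a b, C (-a) (-b) = C a b)
    (hC_nonneg : ∀ a b, 0 ≤ b → b ≤ a → a ^ α - b ^ α ≤ C a b)
    (hC_sign : ∀ a b, b ≤ 0 → 0 ≤ a → a ^ α + (-b) ^ α ≤ C a b) (a b : ℝ) :
    |signedPow α a - signedPow α b| ≤ C a b := by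
  have nonneg : ∀ a b, 0 ≤ b → b ≤ a → |signedPow α a - signedPow α b| ≤ C a b := by
    intro a b hb hba
    rw [signedPow_of_nonneg hα (hb.trans hba), signedPow_of_nonneg hα hb,
      abs_of_nonneg (sub_nonneg.2 (Real.rpow_le_rpow hb hba hα.le))]
    exact hC_nonneg a b hb hba
  suffices ordered : ∀ a b, b ≤ a → |signedPow α a - signedPow α b| ≤ C a b by
    rcases le_total b a with hba | hab
    · exact ordered a b hba
    · rw [abs_sub_comm, hC_comm]
      exact ordered b a hab
  intro a b hba
  rcases le_total 0 b with hb | hb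
  · exact nonneg a b hb hba
  rcases le_total a 0 with ha | ha
  · have h := nonneg (-b) (-a) (neg_nonneg.2 ha) (neg_le_neg hba)
    rwa [signedPow_neg, signedPow_neg, neg_sub_neg, hC_neg, hC_comm] at h
  · have hb' : signedPow α b = -(-b) ^ α := by
      rw [← signedPow_of_nonneg hα (neg_nonneg.2 hb), signedPow_neg, neg_neg]
    rw [signedPow_of_nonneg hα ha, hb', sub_neg_eq_add,
      abs_of_nonneg (add_nonneg (Real.rpow_nonneg ha _) (Real.rpow_nonneg (neg_nonneg.2 hb) _))]
    exact hC_sign a b hb ha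

lemma abs_signedPow_sub_le_of_le_one (hα : 0 < α) (hα1 : α ≤ 1) (a b : ℝ) :
    |signedPow α a - signedPow α b| ≤ 2 * |a - b| ^ α := by
  refine abs_signedPow_sub_le_of_cases hα (C := fun a b => 2 * |a - b| ^ α)
    (fun a b => by rw [abs_sub_comm]) (fun a b => by rw [neg_sub_neg, abs_sub_comm])
    (fun a b hb hba => ?_) (fun a b hb ha => ?_) a b
  · have hsub : a ^ α ≤ b ^ α + (a - b) ^ α := by
      simpa using Real.rpow_add_le_add_rpow hb (sub_nonneg.2 hba) hα.le hα1
    rw [abs_of_nonneg (sub_nonneg.2 hba)]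
    linarith [Real.rpow_nonneg (sub_nonneg.2 hba) α]
  · rw [abs_of_nonneg (by linarith)]
    linarith [Real.rpow_le_rpow ha (by linarith : a ≤ a - b) hα.le,
      Real.rpow_le_rpow (neg_nonneg.2 hb) (by linarith : -b ≤ a - b) hα.le]

lemma rpow_sub_rpow_le_mul_sub (hα : 1 ≤ α) {a b : ℝ} (hb : 0 ≤ b) (hba : b ≤ a) :
    a ^ α - b ^ α ≤ α * a ^ (α - 1) * (a - b) := by
  rcases hba.eq_or_lt with rfl | hba
  · simp
  obtain ⟨c, hc, hslope⟩ := exists_hasDerivAt_eq_slope (fun x : ℝ => x ^ α)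
    (fun x => α * x ^ (α - 1)) hba (Real.continuous_rpow_const (by linarith)).continuousOn
    fun x _ => Real.hasDerivAt_rpow_const (Or.inr hα)
  have hca : c ^ (α - 1) ≤ a ^ (α - 1) :=
    Real.rpow_le_rpow (hb.trans hc.1.le) hc.2.le (by linarith)
  rw [eq_div_iff (sub_ne_zero.2 hba.ne')] at hslope
  rw [← hslope]
  gcongr

lemma abs_signedPow_sub_le_of_one_le (hα : 1 ≤ α) (a b : ℝ) :
    |signedPow α a - signedPow α b| ≤ α * (|a| ^ (α - 1) + |b| ^ (α - 1)) * |a - b| := by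
  have hα0 : 0 < α := by linarith
  refine abs_signedPow_sub_le_of_cases hα0
    (C := fun a b => α * (|a| ^ (α - 1) + |b| ^ (α - 1)) * |a - b|)
    (fun a b => by rw [add_comm, abs_sub_comm])
    (fun a b => by rw [abs_neg, abs_neg, neg_sub_neg, abs_sub_comm])
    (fun a b hb hba => ?_) (fun a b hb ha => ?_) a b
  · rw [abs_of_nonneg (hb.trans hba), abs_of_nonneg (sub_nonneg.2 hba)]
    calc a ^ α - b ^ α ≤ α * a ^ (α - 1) * (a - b) := rpow_sub_rpow_le_mul_sub hα hb hba
      _ ≤ α * (a ^ (α - 1) + |b| ^ (α - 1)) * (a - b) := by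
        gcongr
        exact le_add_of_nonneg_right (by positivity)
  · have hpow : ∀ x : ℝ, 0 ≤ x → x ^ α = x ^ (α - 1) * x := fun x hx => by
      rw [← signedPow_of_nonneg hα0 hx, signedPow, abs_of_nonneg hx]
    rw [abs_of_nonneg ha, abs_of_nonpos hb, abs_of_nonneg (by linarith), hpow a ha,
      hpow (-b) (neg_nonneg.2 hb)]
    have ha' : 0 ≤ a ^ (α - 1) := Real.rpow_nonneg ha _
    have hb' : 0 ≤ (-b) ^ (α - 1) := Real.rpow_nonneg (neg_nonneg.2 hb) _
    calc a ^ (α - 1) * a + (-b) ^ (α - 1) * -b ≤ (a ^ (α - 1) + (-b) ^ (α - 1)) * (a - b) := by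
          nlinarith [mul_le_mul_of_nonneg_left (show a ≤ a - b by linarith) ha',
            mul_le_mul_of_nonneg_left (show -b ≤ a - b by linarith) hb']
      _ ≤ α * (a ^ (α - 1) + (-b) ^ (α - 1)) * (a - b) := by
          rw [mul_assoc]
          exact le_mul_of_one_le_left (mul_nonneg (add_nonneg ha' hb') (by linarith)) hα

end Pointwise

section Lp

variable {X : Type*} [MeasurableSpace X] {μ : Measure X} {α p : ℝ}

lemma eLpNorm_abs_rpow {β : ℝ} (hβ : 0 < β) (hp : 0 ≤ p) (f : X → ℝ) :
    eLpNorm (fun x => |f x| ^ β) (ENNReal.ofReal (p / β)) μ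
      = eLpNorm f (ENNReal.ofReal p) μ ^ β := by
  simp_rw [← Real.norm_eq_abs]
  rw [eLpNorm_norm_rpow f hβ, ← ENNReal.ofReal_mul (div_nonneg hp hβ.le),
    div_mul_cancel₀ _ hβ.ne']

lemma eLpNorm_signedPow_comp (hα : 0 < α) (hp : 0 ≤ p) (f : X → ℝ) :
    eLpNorm (signedPow α ∘ f) (ENNReal.ofReal (p / α)) μ = eLpNorm f (ENNReal.ofReal p) μ ^ α := by
  rw [← eLpNorm_abs_rpow hα hp]
  refine eLpNorm_congr_norm_ae (Eventually.of_forall fun x => ?_)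
  rw [Real.norm_eq_abs, Real.norm_eq_abs, Function.comp_apply, abs_signedPow hα,
    abs_of_nonneg (Real.rpow_nonneg (abs_nonneg _) _)]

lemma MemLp.signedPow_comp (hα : 0 < α) (hp : 0 ≤ p) {f : X → ℝ}
    (hf : MemLp f (ENNReal.ofReal p) μ) :
    MemLp (signedPow α ∘ f) (ENNReal.ofReal (p / α)) μ := by
  refine ⟨(continuous_signedPow hα).comp_aestronglyMeasurable hf.1, ?_⟩
  rw [eLpNorm_signedPow_comp hα hp]
  exact ENNReal.rpow_lt_top_of_nonneg hα.le hf.2.ne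

lemma eLpNorm_signedPow_comp_sub_le_of_le_one (hα : 0 < α) (hα1 : α ≤ 1) (hp : 0 ≤ p)
    (f g : X → ℝ) :
    eLpNorm (signedPow α ∘ f - signedPow α ∘ g) (ENNReal.ofReal (p / α)) μ
      ≤ 2 * eLpNorm (f - g) (ENNReal.ofReal p) μ ^ α := by
  have hdiff : eLpNorm (fun x => |f x - g x| ^ α) (ENNReal.ofReal (p / α)) μ
      = eLpNorm (f - g) (ENNReal.ofReal p) μ ^ α :=
    eLpNorm_abs_rpow hα hp (f - g)
  calc eLpNorm (signedPow α ∘ f - signedPow α ∘ g) (ENNReal.ofReal (p / α)) μ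
      ≤ eLpNorm ((2 : ℝ) • fun x => |f x - g x| ^ α) (ENNReal.ofReal (p / α)) μ := by
        refine eLpNorm_mono fun x => ?_
        simp only [Real.norm_eq_abs, Pi.sub_apply, Function.comp_apply, Pi.smul_apply,
          smul_eq_mul, abs_mul, abs_two, abs_of_nonneg (Real.rpow_nonneg (abs_nonneg _) _)]
        exact abs_signedPow_sub_le_of_le_one hα hα1 _ _
    _ = 2 * eLpNorm (f - g) (ENNReal.ofReal p) μ ^ α := by
        rw [eLpNorm_const_smul, hdiff, Real.enorm_of_nonneg zero_le_two, ENNReal.ofReal_ofNat]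

lemma eLpNorm_signedPow_comp_sub_le_of_one_lt (hα : 1 < α) (hp : 0 < p) {f g : X → ℝ}
    (hf : AEStronglyMeasurable f μ) (hg : AEStronglyMeasurable g μ) :
    eLpNorm (signedPow α ∘ f - signedPow α ∘ g) (ENNReal.ofReal (p / α)) μ
      ≤ ENNReal.ofReal α * ENNReal.LpAddConst (ENNReal.ofReal (p / (α - 1)))
        * (eLpNorm f (ENNReal.ofReal p) μ ^ (α - 1) + eLpNorm g (ENNReal.ofReal p) μ ^ (α - 1))
        * eLpNorm (f - g) (ENNReal.ofReal p) μ := by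
  have hα0 : 0 < α := by linarith
  have hα1 : 0 < α - 1 := by linarith
  set q := ENNReal.ofReal (p / (α - 1))
  set w : X → ℝ := (fun x => |f x| ^ (α - 1)) + fun x => |g x| ^ (α - 1)
  have hpow : ∀ h : X → ℝ, AEStronglyMeasurable h μ →
      AEStronglyMeasurable (fun x => |h x| ^ (α - 1)) μ := fun h hh =>
    ((Real.continuous_rpow_const hα1.le).comp continuous_abs).comp_aestronglyMeasurable hh
  -- Hölder with `α / p = (α - 1) / p + 1 / p`
  have : ENNReal.HolderTriple q (ENNReal.ofReal p) (ENNReal.ofReal (p / α)) := by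
    constructor
    rw [← ENNReal.ofReal_inv_of_pos (by positivity), ← ENNReal.ofReal_inv_of_pos hp,
      ← ENNReal.ofReal_inv_of_pos (by positivity), ← ENNReal.ofReal_add (by positivity)
      (by positivity), inv_div, inv_div]
    congr 1
    field_simp
    ring
  calc eLpNorm (signedPow α ∘ f - signedPow α ∘ g) (ENNReal.ofReal (p / α)) μ
      ≤ eLpNorm ((α • w) • (f - g)) (ENNReal.ofReal (p / α)) μ := by
        refine eLpNorm_mono fun x => ?_
        rw [Real.norm_eq_abs, Real.norm_eq_abs]
        refine (abs_signedPow_sub_le_of_one_le hα.le (f x) (g x)).trans_eq ?_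
        simp only [w, Pi.smul_apply, Pi.mul_apply, Pi.add_apply, Pi.sub_apply, smul_eq_mul,
          abs_mul]
        rw [abs_of_nonneg hα0.le,
          abs_of_nonneg (by positivity : 0 ≤ |f x| ^ (α - 1) + |g x| ^ (α - 1))]
    _ ≤ eLpNorm (α • w) q μ * eLpNorm (f - g) (ENNReal.ofReal p) μ :=
        eLpNorm_smul_le_mul_eLpNorm (hf.sub hg) (((hpow f hf).add (hpow g hg)).const_smul α)
    _ ≤ ENNReal.ofReal α * (ENNReal.LpAddConst q * (eLpNorm f (ENNReal.ofReal p) μ ^ (α - 1)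
          + eLpNorm g (ENNReal.ofReal p) μ ^ (α - 1))) * eLpNorm (f - g) (ENNReal.ofReal p) μ := by
        rw [eLpNorm_const_smul, Real.enorm_of_nonneg hα0.le]
        gcongr
        calc eLpNorm w q μ
            ≤ ENNReal.LpAddConst q * (eLpNorm (fun x => |f x| ^ (α - 1)) q μ
                + eLpNorm (fun x => |g x| ^ (α - 1)) q μ) :=
              eLpNorm_add_le' (hpow f hf) (hpow g hg) q
          _ = _ := by rw [eLpNorm_abs_rpow hα1 hp.le, eLpNorm_abs_rpow hα1 hp.le]
    _ = _ := by ring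

theorem tendsto_eLpNorm_signedPow_comp_sub {ι : Type*} {l : Filter ι} {f : ι → X → ℝ}
    {g : X → ℝ} (hα : 0 < α) (hp : 0 < p) (hf : ∀ᶠ i in l, AEStronglyMeasurable (f i) μ)
    (hg : MemLp g (ENNReal.ofReal p) μ)
    (hfg : Tendsto (fun i => eLpNorm (f i - g) (ENNReal.ofReal p) μ) l (𝓝 0)) :
    Tendsto (fun i => eLpNorm (signedPow α ∘ f i - signedPow α ∘ g) (ENNReal.ofReal (p / α)) μ)
      l (𝓝 0) := by
  rcases le_or_gt α 1 with hα1 | hα1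
  · have hbound : Tendsto (fun i => 2 * eLpNorm (f i - g) (ENNReal.ofReal p) μ ^ α) l (𝓝 0) := by
      simpa [ENNReal.zero_rpow_of_pos hα] using
        ENNReal.Tendsto.const_mul (a := 2)
          (((ENNReal.continuous_rpow_const (y := α)).tendsto 0).comp hfg)
          (Or.inr (ENNReal.ofNat_ne_top (n := 2)))
    exact tendsto_of_tendsto_of_tendsto_of_le_of_le tendsto_const_nhds hbound (fun _ => zero_le)
      fun i => eLpNorm_signedPow_comp_sub_le_of_le_one hα hα1 hp.le (f i) g
  -- for `α > 1` the Lipschitz constant involves `‖f i‖_p`, which is eventually bounded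
  set K := ENNReal.LpAddConst (ENNReal.ofReal p)
  set M := K * (1 + eLpNorm g (ENNReal.ofReal p) μ) with hM_def
  set C := ENNReal.ofReal α * ENNReal.LpAddConst (ENNReal.ofReal (p / (α - 1)))
    * (M ^ (α - 1) + eLpNorm g (ENNReal.ofReal p) μ ^ (α - 1)) with hC_def
  have hM : M ≠ ⊤ := by
    have := ENNReal.LpAddConst_lt_top (ENNReal.ofReal p)
    have := hg.eLpNorm_lt_top
    finiteness
  have hC : C ≠ ⊤ := by
    have := ENNReal.LpAddConst_lt_top (ENNReal.ofReal (p / (α - 1)))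
    have := hg.eLpNorm_lt_top
    have : M ^ (α - 1) ≠ ⊤ := ENNReal.rpow_ne_top_of_nonneg (by linarith) hM
    finiteness
  have hbdd : ∀ᶠ i in l, eLpNorm (f i) (ENNReal.ofReal p) μ ≤ M := by
    filter_upwards [hf, hfg.eventually (ge_mem_nhds zero_lt_one)] with i hfi hclose
    calc eLpNorm (f i) (ENNReal.ofReal p) μ = eLpNorm (f i - g + g) (ENNReal.ofReal p) μ := by
          rw [sub_add_cancel]
      _ ≤ K * (eLpNorm (f i - g) (ENNReal.ofReal p) μ + eLpNorm g (ENNReal.ofReal p) μ) :=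
          eLpNorm_add_le' (hfi.sub hg.1) hg.1 _
      _ ≤ M := by
          rw [hM_def]
          gcongr
  have hlin : Tendsto (fun i => C * eLpNorm (f i - g) (ENNReal.ofReal p) μ) l (𝓝 0) := by
    simpa using ENNReal.Tendsto.const_mul hfg (Or.inr hC)
  refine tendsto_of_tendsto_of_tendsto_of_le_of_le' tendsto_const_nhds hlin
    (Eventually.of_forall fun _ => zero_le) ?_
  filter_upwards [hf, hbdd] with i hfi hMi
  refine (eLpNorm_signedPow_comp_sub_le_of_one_lt hα1 hp hfi hg.1).trans ?_
  rw [hC_def]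
  gcongr

end Lp

/-- `t ↦ u t` belongs to `C(s; Lᵖ(μ))`. -/
def ContinuousOnLp {T X E : Type*} [TopologicalSpace T] [MeasurableSpace X]
    [NormedAddCommGroup E] (u : T → X → E) (p : ℝ≥0∞) (μ : Measure X) (s : Set T) : Prop :=
  (∀ t ∈ s, MemLp (u t) p μ) ∧
    ∀ t₀ ∈ s, Tendsto (fun t => eLpNorm (u t - u t₀) p μ) (𝓝[s] t₀) (𝓝 0)

section ContinuousOnLp

variable {T X : Type*} [TopologicalSpace T] [MeasurableSpace X] {μ : Measure X} {s : Set T}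
  {u : T → X → ℝ} {α p : ℝ}

theorem ContinuousOnLp.signedPow_comp (hα : 0 < α) (hp : 0 < p)
    (hu : ContinuousOnLp u (ENNReal.ofReal p) μ s) :
    ContinuousOnLp (fun t => signedPow α ∘ u t) (ENNReal.ofReal (p / α)) μ s :=
  ⟨fun t ht => MemLp.signedPow_comp hα hp.le (hu.1 t ht), fun t₀ ht₀ =>
    tendsto_eLpNorm_signedPow_comp_sub hα hp
      (eventually_mem_nhdsWithin.mono fun t ht => (hu.1 t ht).1) (hu.1 t₀ ht₀) (hu.2 t₀ ht₀)⟩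

theorem continuousOnLp_signedPow_comp_iff (hα : 0 < α) (hp : 0 < p) :
    ContinuousOnLp (fun t => signedPow α ∘ u t) (ENNReal.ofReal (p / α)) μ s
      ↔ ContinuousOnLp u (ENNReal.ofReal p) μ s := by
  refine ⟨fun h => ?_, fun h => h.signedPow_comp hα hp⟩
  have hinv := h.signedPow_comp (inv_pos.2 hα) (div_pos hp hα)
  have hcomp : signedPow α⁻¹ ∘ signedPow α = id := funext (signedPow_inv_signedPow hα)
  simpa only [← Function.comp_assoc, hcomp, Function.id_comp, div_inv_eq_mul,
    div_mul_cancel₀ p hα.ne'] using hinv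

end ContinuousOnLp

theorem time_continuity_equivalence_general (N : ℕ) (E : Set (Fin N → ℝ))
    (α T : ℝ) (hα : 0 < α) (u : ℝ → (Fin N → ℝ) → ℝ) :
    ((∀ t ∈ Icc (0 : ℝ) T, MemLp (u t) (ENNReal.ofReal (α + 1)) (volume.restrict E)) ∧
      ∀ t₀ ∈ Icc (0 : ℝ) T,
        Tendsto (fun t => eLpNorm (fun x => u t x - u t₀ x)
            (ENNReal.ofReal (α + 1)) (volume.restrict E))
          (nhdsWithin t₀ (Icc (0 : ℝ) T)) (nhds 0)) ↔
    ((∀ t ∈ Icc (0 : ℝ) T, MemLp (fun x => |u t x| ^ (α - 1) * u t x)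
        (ENNReal.ofReal ((α + 1) / α)) (volume.restrict E)) ∧
      ∀ t₀ ∈ Icc (0 : ℝ) T,
        Tendsto (fun t => eLpNorm
            (fun x => |u t x| ^ (α - 1) * u t x - |u t₀ x| ^ (α - 1) * u t₀ x)
            (ENNReal.ofReal ((α + 1) / α)) (volume.restrict E))
          (nhdsWithin t₀ (Icc (0 : ℝ) T)) (nhds 0)) :=
  (continuousOnLp_signedPow_comp_iff hα (by linarith)).symm

theorem time_continuity_equivalence (N : ℕ) (E : Set (Fin N → ℝ)) (hE : MeasurableSet E)
    (α T : ℝ) (hα : 0 < α) (hT : 0 < T) (u : ℝ → (Fin N → ℝ) → ℝ) :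
    ((∀ t ∈ Icc (0 : ℝ) T, MemLp (u t) (ENNReal.ofReal (α + 1)) (volume.restrict E)) ∧
      ∀ t₀ ∈ Icc (0 : ℝ) T,
        Tendsto (fun t => eLpNorm (fun x => u t x - u t₀ x)
            (ENNReal.ofReal (α + 1)) (volume.restrict E))
          (nhdsWithin t₀ (Icc (0 : ℝ) T)) (nhds 0)) ↔
    ((∀ t ∈ Icc (0 : ℝ) T, MemLp (fun x => |u t x| ^ (α - 1) * u t x)
        (ENNReal.ofReal ((α + 1) / α)) (volume.restrict E)) ∧
      ∀ t₀ ∈ Icc (0 : ℝ) T,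
        Tendsto (fun t => eLpNorm
            (fun x => |u t x| ^ (α - 1) * u t x - |u t₀ x| ^ (α - 1) * u t₀ x)
            (ENNReal.ofReal ((α + 1) / α)) (volume.restrict E))
          (nhdsWithin t₀ (Icc (0 : ℝ) T)) (nhds 0)) :=
  time_continuity_equivalence_general N E α T hα u
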